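/- arXiv:2110.15663 — 2 statements merged into one kernel-verified Lean document; each statement's English description precedes it below -/
import Mathlib

section
/- Let ψ̄ be a smooth function on an exterior domain Ω ⊂ ℝ² vanishing on the boundary Γ, with ū = ∇⊥ψ̄ smooth and bounded together with its derivatives. Let η: [0,∞) → [0,1] be smooth with η ≡ 1 on [0,1] and η ≡ 0 on [2,∞). Define the boundary layer corrector u_b(x) = ∇⊥(η(ρ(x)/δ) ψ̄(x)), where ρ(x) = dist(x, Γ). Then there is a constant K, independent of δ ∈ (0,1), such that ‖u_b‖_{L²(Ω)} ≤ K δ^{1/2}. -/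
open MeasureTheory Real Filter Set Topology

noncomputable section

/-- The plane ℝ². -/
abbrev R2 := EuclideanSpace ℝ (Fin 2)

/-- Partial derivative ∂ᵢ of a scalar function. -/
def pd (i : Fin 2) (f : R2 → ℝ) (x : R2) : ℝ :=
  fderiv ℝ f x (EuclideanSpace.single i 1)

/-- Laplacian of a scalar function. -/
def lap (f : R2 → ℝ) (x : R2) : ℝ := ∑ i, pd i (pd i f) x

/-- Componentwise Laplacian of a vector field. -/
def vlap (u : R2 → R2) (x : R2) : R2 :=
  WithLp.toLp 2 ![lap (fun y => u y 0) x, lap (fun y => u y 1) x]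

/-- L²(Ω)-norm of a vector field. -/
def l2 (Ω : Set R2) (f : R2 → R2) : ℝ := Real.sqrt (∫ x in Ω, ‖f x‖ ^ 2)

/-- L²(Ω)-norm of a scalar function. -/
def l2s (Ω : Set R2) (f : R2 → ℝ) : ℝ := Real.sqrt (∫ x in Ω, (f x) ^ 2)

/-- L²(Ω)-norm of the k-th spatial derivatives Dᵏf. -/
def dkl2 (Ω : Set R2) (k : ℕ) (f : R2 → R2) : ℝ :=
  Real.sqrt (∫ x in Ω, ‖iteratedFDeriv ℝ k f x‖ ^ 2)

/-- Divergence of a vector field. -/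
def divg (u : R2 → R2) (x : R2) : ℝ := ∑ i, pd i (fun y => u y i) x

/-- Perpendicular gradient ∇⊥ψ = (−∂₂ψ, ∂₁ψ). -/
def perpGrad (ψ : R2 → ℝ) (x : R2) : R2 := WithLp.toLp 2 ![-(pd 1 ψ x), pd 0 ψ x]

/-- Perpendicular divergence ∇⊥ · u = −∂₂u₁ + ∂₁u₂. -/
def perpDiv (u : R2 → R2) (x : R2) : ℝ :=
  -(pd 1 (fun y => u y 0) x) + pd 0 (fun y => u y 1) x

/-- Distance to the boundary of Ω. -/
def bdist (Ω : Set R2) (x : R2) : ℝ := Metric.infDist x (frontier Ω)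

/-- Ω ⊂ ℝ² is the exterior of a bounded, simply connected, open obstacle. -/
def ExteriorDomain (Ω : Set R2) : Prop :=
  ∃ O : Set R2, IsOpen O ∧ Bornology.IsBounded O ∧ O.Nonempty ∧
    SimplyConnectedSpace O ∧ Ω = (closure O)ᶜ

/-- The second grade fluid equations on Ω with viscosity ν and length scale α:
∂t(u−α²Δu) + u·∇(u−α²Δu) + (∇u)ᵗ·(u−α²Δu) + ∇p = νΔu, div u = 0,
no-slip boundary condition and decay at infinity. -/
def SecondGrade (Ω : Set R2) (ν α : ℝ) (u : ℝ → R2 → R2) (p : ℝ → R2 → ℝ) : Prop :=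
  (∀ t : ℝ, 0 < t → ∀ x ∈ Ω, ∀ i : Fin 2,
      deriv (fun s => u s x i - α ^ 2 * lap (fun y => u s y i) x) t
        + (∑ j, u t x j *
            pd j (fun y => u t y i - α ^ 2 * lap (fun z => u t z i) y) x)
        + (∑ j, pd i (fun y => u t y j) x *
            (u t x j - α ^ 2 * lap (fun y => u t y j) x))
        + pd i (p t) x
      = ν * lap (fun y => u t y i) x) ∧
  (∀ t : ℝ, 0 ≤ t → ∀ x ∈ Ω, divg (u t) x = 0) ∧
  (∀ t : ℝ, 0 ≤ t → ∀ x ∈ frontier Ω, u t x = 0) ∧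
  (∀ t : ℝ, 0 ≤ t → Tendsto (u t) (cocompact R2) (𝓝 0))

/-- The incompressible Euler equations on Ω with non-penetration boundary
condition (n is the unit normal field on the boundary) and decay at infinity. -/
def EulerEq (Ω : Set R2) (n : R2 → R2) (ue : ℝ → R2 → R2) (pe : ℝ → R2 → ℝ) : Prop :=
  (∀ t : ℝ, 0 ≤ t → ∀ x ∈ Ω, ∀ i : Fin 2,
      deriv (fun s => ue s x i) t
        + (∑ j, ue t x j * pd j (fun y => ue t y i) x) + pd i (pe t) x = 0) ∧
  (∀ t : ℝ, 0 ≤ t → ∀ x ∈ Ω, divg (ue t) x = 0) ∧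
  (∀ t : ℝ, 0 ≤ t → ∀ x ∈ frontier Ω, inner ℝ (ue t x) (n x) = (0 : ℝ)) ∧
  (∀ t : ℝ, 0 ≤ t → Tendsto (ue t) (cocompact R2) (𝓝 0))

/-- the boundary layer corrector u_b = ∇⊥(η(ρ(x)/δ)ψ̄) satisfies
‖u_b‖_{L²(Ω)} ≤ K δ^{1/2}, uniformly in δ ∈ (0,1). -/
theorem corrector_l2_bound
    (Ω : Set R2) (hΩ : ExteriorDomain Ω)
    -- the collar {ρ < 2δ} has measure O(δ) (smooth compact boundary)
    (hcollar : ∃ M > (0:ℝ), ∀ δ ∈ Ioo (0:ℝ) 1,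
      (volume {x ∈ Ω | bdist Ω x < 2 * δ}).toReal ≤ M * δ)
    (ψ : R2 → ℝ) (hψ : ContDiff ℝ (⊤ : ℕ∞) ψ)
    (hψ0 : ∀ x ∈ frontier Ω, ψ x = 0)
    -- ū = ∇⊥ψ̄ is smooth and bounded together with its derivatives
    (hbd : ∀ k : ℕ, 1 ≤ k → ∃ M : ℝ, ∀ x, ‖iteratedFDeriv ℝ k ψ x‖ ≤ M)
    (η : ℝ → ℝ) (hη : ContDiff ℝ (⊤ : ℕ∞) η)
    (hη1 : ∀ s ∈ Icc (0:ℝ) 1, η s = 1) (hη0 : ∀ s : ℝ, 2 ≤ s → η s = 0)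
    (hηb : ∀ s, 0 ≤ η s ∧ η s ≤ 1)
    (ub : ℝ → R2 → R2)
    (hub : ∀ δ : ℝ, ∀ x, ub δ x = perpGrad (fun y => η (bdist Ω y / δ) * ψ y) x) :
    ∃ K > (0:ℝ), ∀ δ ∈ Ioo (0:ℝ) 1, l2 Ω (ub δ) ≤ K * Real.sqrt δ := by
  obtain ⟨M, hM, hcol⟩ := hcollar
  obtain ⟨O, hOopen, hObd, hOne, -, hΩeq⟩ := hΩ
  -- basic facts about the boundary Γ
  have hΓeq : frontier Ω = frontier (closure O) := by rw [hΩeq, frontier_compl]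
  have hΓbd : Bornology.IsBounded (frontier Ω) := by
    rw [hΓeq]
    exact hObd.closure.subset (frontier_subset_closure.trans (closure_closure (s := O)).subset)
  have hΓcp : IsCompact (frontier Ω) :=
    Metric.isCompact_of_isClosed_isBounded isClosed_frontier hΓbd
  have hΓne : (frontier Ω).Nonempty := by
    rw [hΓeq]
    refine nonempty_frontier_iff.2 ⟨hOne.closure, fun h => ?_⟩
    exact NormedSpace.unbounded_univ ℝ R2 (h ▸ hObd.closure)
  have hΩopen : IsOpen Ω := by rw [hΩeq]; exact isClosed_closure.isOpen_compl
  -- distance function facts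
  have hρnn : ∀ x, 0 ≤ bdist Ω x := fun x => Metric.infDist_nonneg
  have hρcont : Continuous (bdist Ω) := Metric.continuous_infDist_pt (frontier Ω)
  have hρlip : ∀ y z : R2, |bdist Ω y - bdist Ω z| ≤ dist y z := by
    intro y z
    rw [abs_sub_le_iff]
    constructor
    · have := Metric.infDist_le_infDist_add_dist (x := y) (y := z) (s := frontier Ω)
      simp only [bdist]; linarith
    · have := Metric.infDist_le_infDist_add_dist (x := z) (y := y) (s := frontier Ω)
      rw [dist_comm z y] at this
      simp only [bdist]; linarith
  -- Lipschitz constant for ψ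
  obtain ⟨M0, hM0⟩ := hbd 1 le_rfl
  set M₁ : ℝ := max M0 1 with hM₁def
  have hM₁1 : (1:ℝ) ≤ M₁ := le_max_right _ _
  have hM₁0 : (0:ℝ) ≤ M₁ := by linarith
  have hψd : ∀ x : R2, ‖fderiv ℝ ψ x‖ ≤ M₁ := by
    intro x
    rw [← norm_iteratedFDeriv_zero (𝕜 := ℝ) (f := fderiv ℝ ψ) (x := x),
      norm_iteratedFDeriv_fderiv]
    exact le_trans (hM0 x) (le_max_left _ _)
  have hψlip : LipschitzWith M₁.toNNReal ψ := by
    apply lipschitzWith_of_nnnorm_fderiv_le (hψ.differentiable (by simp))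
    intro x
    rw [← norm_toNNReal]
    exact Real.toNNReal_mono (hψd x)
  have hψdist : ∀ y z : R2, |ψ y - ψ z| ≤ M₁ * dist y z := by
    intro y z
    have := hψlip.dist_le_mul y z
    rwa [Real.dist_eq, Real.coe_toNNReal _ hM₁0] at this
  -- ψ vanishes at rate ρ near the boundary
  have hψρ : ∀ y : R2, |ψ y| ≤ M₁ * bdist Ω y := by
    intro y
    obtain ⟨z, hzΓ, hz⟩ := hΓcp.exists_infDist_eq_dist hΓne y
    have h0 : ψ z = 0 := hψ0 z hzΓ
    have h1 := hψdist y z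
    rw [h0, sub_zero] at h1
    rw [bdist, hz]
    exact h1
  -- Lipschitz constant for η on [0, ∞)
  have hηdc : Continuous fun s => ‖fderiv ℝ η s‖ := (hη.continuous_fderiv (by simp)).norm
  obtain ⟨s0, -, hs0⟩ := IsCompact.exists_isMaxOn (isCompact_Icc (a := (0:ℝ)) (b := 2))
    (nonempty_Icc.2 (by norm_num)) hηdc.continuousOn
  set L : ℝ := ‖fderiv ℝ η s0‖ with hLdef
  have hL0 : 0 ≤ L := norm_nonneg _
  have hηd0 : ∀ s : ℝ, 2 < s → fderiv ℝ η s = 0 := by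
    intro s hs
    have hev : η =ᶠ[𝓝 s] fun _ => (0:ℝ) := by
      filter_upwards [Ioi_mem_nhds hs] with t ht
      exact hη0 t (le_of_lt ht)
    rw [hev.fderiv_eq, fderiv_fun_const]
    rfl
  have hηdb : ∀ s : ℝ, 0 ≤ s → ‖fderiv ℝ η s‖ ≤ L := by
    intro s hs
    rcases le_or_gt s 2 with h | h
    · exact hs0 ⟨hs, h⟩
    · rw [hηd0 s h]; simpa using hL0
  have hηlip : LipschitzOnWith L.toNNReal η (Ici 0) := by
    apply Convex.lipschitzOnWith_of_nnnorm_fderiv_le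
      (fun x _ => (hη.differentiable (by simp)).differentiableAt) ?_ (convex_Ici 0)
    intro x hx
    rw [← norm_toNNReal]
    exact Real.toNNReal_mono (hηdb x hx)
  have hηdist : ∀ a b : ℝ, 0 ≤ a → 0 ≤ b → |η a - η b| ≤ L * |a - b| := by
    intro a b ha hb
    have := hηlip.dist_le_mul a ha b hb
    rwa [Real.dist_eq, Real.dist_eq, Real.coe_toNNReal _ hL0] at this
  -- the global Lipschitz constant
  set C : ℝ := 2 * L * M₁ + M₁ with hCdef
  have hC1 : (1:ℝ) ≤ C := by nlinarith
  have hC0 : (0:ℝ) ≤ C := by linarith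
  refine ⟨Real.sqrt (2 * C ^ 2 * M), Real.sqrt_pos.2 (by positivity), ?_⟩
  rintro δ ⟨hδ0, hδ1⟩
  set g : R2 → ℝ := fun y => η (bdist Ω y / δ) * ψ y with hgdef
  -- two-point estimate
  have key : ∀ y z : R2, bdist Ω y ≤ bdist Ω z → |g y - g z| ≤ C * dist y z := by
    intro y z hyz
    rcases le_or_gt (2 * δ) (bdist Ω y) with hbig | hsmall
    · have hy : η (bdist Ω y / δ) = 0 := by
        apply hη0; rw [le_div_iff₀ hδ0]; linarith
      have hz : η (bdist Ω z / δ) = 0 := by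
        apply hη0; rw [le_div_iff₀ hδ0]; linarith
      simp only [hgdef, hy, hz, zero_mul, sub_zero, abs_zero]
      positivity
    · have ha : 0 ≤ bdist Ω y / δ := div_nonneg (hρnn y) hδ0.le
      have hb : 0 ≤ bdist Ω z / δ := div_nonneg (hρnn z) hδ0.le
      have hsplit : g y - g z
          = (η (bdist Ω y / δ) - η (bdist Ω z / δ)) * ψ y
            + η (bdist Ω z / δ) * (ψ y - ψ z) := by
        simp only [hgdef]; ring
      rw [hsplit]
      refine le_trans (abs_add_le _ _) ?_
      rw [abs_mul, abs_mul]
      have h1 : |η (bdist Ω y / δ) - η (bdist Ω z / δ)| ≤ L * (dist y z / δ) := by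
        refine le_trans (hηdist _ _ ha hb) ?_
        rw [div_sub_div_same, abs_div, abs_of_pos hδ0]
        have := hρlip y z
        gcongr
      have h2 : |ψ y| ≤ M₁ * (2 * δ) := by
        refine le_trans (hψρ y) ?_
        have := hsmall.le
        nlinarith
      have t1 : |η (bdist Ω y / δ) - η (bdist Ω z / δ)| * |ψ y|
          ≤ (L * (dist y z / δ)) * (M₁ * (2 * δ)) :=
        mul_le_mul h1 h2 (abs_nonneg _) (by positivity)
      have e1 : (L * (dist y z / δ)) * (M₁ * (2 * δ)) = 2 * L * M₁ * dist y z := by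
        field_simp
      have h3 : |η (bdist Ω z / δ)| ≤ 1 := by
        rw [abs_of_nonneg (hηb _).1]; exact (hηb _).2
      have h4 : |ψ y - ψ z| ≤ M₁ * dist y z := hψdist y z
      have t2 : |η (bdist Ω z / δ)| * |ψ y - ψ z| ≤ 1 * (M₁ * dist y z) :=
        mul_le_mul h3 h4 (abs_nonneg _) one_pos.le
      rw [e1] at t1
      rw [hCdef]
      nlinarith [dist_nonneg (x := y) (y := z)]
  have glip : LipschitzWith C.toNNReal g := by
    apply LipschitzWith.of_dist_le_mul
    intro y z
    rw [Real.dist_eq, Real.coe_toNNReal _ hC0]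
    rcases le_total (bdist Ω y) (bdist Ω z) with h | h
    · exact key y z h
    · rw [abs_sub_comm, dist_comm]
      exact key z y h
  -- pointwise derivative bounds
  have hpd : ∀ (x : R2) (i : Fin 2), |pd i g x| ≤ C := by
    intro x i
    have h1 : ‖fderiv ℝ g x‖ ≤ C := by
      have := norm_fderiv_le_of_lipschitz ℝ (x₀ := x) glip
      rwa [Real.coe_toNNReal _ hC0] at this
    calc |pd i g x| = ‖fderiv ℝ g x (EuclideanSpace.single i 1)‖ := rfl
      _ ≤ ‖fderiv ℝ g x‖ * ‖EuclideanSpace.single i (1:ℝ)‖ :=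
          (fderiv ℝ g x).le_opNorm _
      _ ≤ C * ‖EuclideanSpace.single i (1:ℝ)‖ :=
          mul_le_mul_of_nonneg_right h1 (norm_nonneg _)
      _ = C := by rw [EuclideanSpace.norm_single, norm_one, mul_one]
  -- vanishing away from the boundary
  have hzero : ∀ x : R2, 2 * δ < bdist Ω x → ∀ i, pd i g x = 0 := by
    intro x hx i
    have hopen : IsOpen {y : R2 | 2 * δ < bdist Ω y} :=
      isOpen_lt continuous_const hρcont
    have hev : g =ᶠ[𝓝 x] fun _ => (0:ℝ) := by
      filter_upwards [hopen.mem_nhds hx] with y hy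
      have hy' : 2 * δ < bdist Ω y := hy
      have : η (bdist Ω y / δ) = 0 := by
        apply hη0; rw [le_div_iff₀ hδ0]; linarith
      simp only [hgdef, this, zero_mul]
    have : fderiv ℝ g x = 0 := by rw [hev.fderiv_eq, fderiv_fun_const]; rfl
    simp only [pd, this]
    rfl
  -- compute the norm of the corrector
  have hnorm : ∀ x : R2, ‖ub δ x‖ ^ 2 = pd 1 g x ^ 2 + pd 0 g x ^ 2 := by
    intro x
    rw [hub δ x, ← hgdef, EuclideanSpace.norm_eq, Real.sq_sqrt (by positivity)]
    simp [perpGrad, Fin.sum_univ_two, sq_abs]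
  -- the support set
  set S : Set R2 := {x : R2 | bdist Ω x ≤ 2 * δ} with hSdef
  have hSmeas : MeasurableSet S :=
    (isClosed_le hρcont continuous_const).measurableSet
  have hbdd2 : Bornology.IsBounded {x : R2 | bdist Ω x ≤ 2} := by
    obtain ⟨c, hcΓ⟩ := id hΓne
    obtain ⟨r, hr⟩ := hΓbd.subset_closedBall c
    have hsub : {x : R2 | bdist Ω x ≤ 2} ⊆ Metric.closedBall c (r + 3) := by
      intro x hx
      have hx2 : bdist Ω x ≤ 2 := hx
      have hx3 : Metric.infDist x (frontier Ω) < 3 := lt_of_le_of_lt hx2 (by norm_num)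
      obtain ⟨z, hzΓ, hz⟩ := (Metric.infDist_lt_iff hΓne).1 hx3
      have hzc : dist z c ≤ r := hr hzΓ
      have : dist x c ≤ dist x z + dist z c := dist_triangle x z c
      simp only [Metric.mem_closedBall]
      linarith
    exact Metric.isBounded_closedBall.subset hsub
  have hSsub2 : S ⊆ {x : R2 | bdist Ω x ≤ 2} := by
    intro x hx
    have hx' : bdist Ω x ≤ 2 * δ := hx
    show bdist Ω x ≤ 2
    linarith
  have hSfin : volume S < ⊤ :=
    lt_of_le_of_lt (measure_mono hSsub2) (hbdd2.measure_lt_top)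
  -- pointwise comparison with an indicator
  have hptwise : ∀ x : R2, ‖ub δ x‖ ^ 2 ≤ S.indicator (fun _ => 2 * C ^ 2) x := by
    intro x
    by_cases hx : x ∈ S
    · rw [indicator_of_mem hx, hnorm x]
      have h1 := abs_le.1 (hpd x 1)
      have h0 := abs_le.1 (hpd x 0)
      nlinarith [h1.1, h1.2, h0.1, h0.2]
    · rw [indicator_of_notMem hx, hnorm x]
      have hx' : 2 * δ < bdist Ω x := not_le.1 hx
      rw [hzero x hx' 1, hzero x hx' 0]
      norm_num
  -- integrability of the dominating function
  have hind : Integrable (S.indicator fun _ => 2 * C ^ 2) (volume.restrict Ω) := by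
    rw [integrable_indicator_iff hSmeas]
    refine (integrableOn_const_iff enorm_ne_top).2 (Or.inr ?_)
    rw [Measure.restrict_apply hSmeas]
    exact lt_of_le_of_lt (measure_mono inter_subset_left) hSfin
  -- the integral bound
  have hInt : (∫ x in Ω, ‖ub δ x‖ ^ 2) ≤ 2 * C ^ 2 * (volume (S ∩ Ω)).toReal := by
    have hmono := integral_mono_of_nonneg
      (ae_of_all _ fun x => sq_nonneg ‖ub δ x‖) hind (ae_of_all _ hptwise)
    rw [integral_indicator hSmeas, setIntegral_const, measureReal_restrict_apply hSmeas, measureReal_def,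
      smul_eq_mul] at hmono
    calc (∫ x in Ω, ‖ub δ x‖ ^ 2) ≤ (volume (S ∩ Ω)).toReal * (2 * C ^ 2) := hmono
      _ = 2 * C ^ 2 * (volume (S ∩ Ω)).toReal := by ring
  -- the volume bound
  have hvol : (volume (S ∩ Ω)).toReal ≤ M * δ := by
    by_contra hcon
    push_neg at hcon
    set ε : ℝ := (volume (S ∩ Ω)).toReal - M * δ with hεdef
    have hε : 0 < ε := by linarith
    set δ' : ℝ := min (δ + ε / (2 * M)) ((δ + 1) / 2) with hδ'def
    have hδ'1 : δ' < 1 := lt_of_le_of_lt (min_le_right _ _) (by linarith)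
    have hδδ' : δ < δ' := by
      have hpos : 0 < ε / (2 * M) := div_pos hε (by linarith)
      exact lt_min (by linarith) (by linarith)
    have hδ'0 : 0 < δ' := lt_trans hδ0 hδδ'
    have hsub : S ∩ Ω ⊆ {x ∈ Ω | bdist Ω x < 2 * δ'} := by
      rintro x ⟨hxS, hxΩ⟩
      refine ⟨hxΩ, ?_⟩
      have : bdist Ω x ≤ 2 * δ := hxS
      linarith
    have hsub2 : {x ∈ Ω | bdist Ω x < 2 * δ'} ⊆ {x : R2 | bdist Ω x ≤ 2} := by
      rintro x ⟨-, hx⟩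
      show bdist Ω x ≤ 2
      have hd1 : δ' ≤ (δ + 1) / 2 := min_le_right _ _
      linarith
    have hfin : volume {x ∈ Ω | bdist Ω x < 2 * δ'} ≠ ⊤ :=
      (lt_of_le_of_lt (measure_mono hsub2) hbdd2.measure_lt_top).ne
    have h1 : (volume (S ∩ Ω)).toReal ≤ (volume {x ∈ Ω | bdist Ω x < 2 * δ'}).toReal :=
      ENNReal.toReal_mono hfin (measure_mono hsub)
    have h2 := hcol δ' ⟨hδ'0, hδ'1⟩
    have h3 : M * δ' ≤ M * δ + ε / 2 := by
      have : δ' ≤ δ + ε / (2 * M) := min_le_left _ _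
      have := mul_le_mul_of_nonneg_left this hM.le
      have hMne : M ≠ 0 := hM.ne'
      calc M * δ' ≤ M * (δ + ε / (2 * M)) := by assumption
        _ = M * δ + ε / 2 := by field_simp
    linarith
  -- conclusion
  have hfinal : (∫ x in Ω, ‖ub δ x‖ ^ 2) ≤ 2 * C ^ 2 * M * δ := by
    calc (∫ x in Ω, ‖ub δ x‖ ^ 2) ≤ 2 * C ^ 2 * (volume (S ∩ Ω)).toReal := hInt
      _ ≤ 2 * C ^ 2 * (M * δ) := mul_le_mul_of_nonneg_left hvol (by positivity)
      _ = 2 * C ^ 2 * M * δ := by ring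
  rw [l2]
  calc Real.sqrt (∫ x in Ω, ‖ub δ x‖ ^ 2) ≤ Real.sqrt (2 * C ^ 2 * M * δ) :=
        Real.sqrt_le_sqrt hfinal
    _ = Real.sqrt (2 * C ^ 2 * M) * Real.sqrt δ := Real.sqrt_mul (by positivity) δ
end
end

section
/- Let u₀ ∈ H³(Ω)² be divergence-free with u₀·n = 0 on Γ, and let ψ be its stream function vanishing on Γ. Let φ be a smooth cutoff with φ ≡ 0 on [0,1], φ ≡ 1 on [2,∞), 0 ≤ φ ≤ 1. Define u₀^α(x) = ∇⊥(φ(ρ(x)/α) ψ(x)). Then ‖u₀^α − u₀‖_{L²(Ω)} ≤ K α^{1/2} as α → 0. -/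
open MeasureTheory Real Filter Set Topology

noncomputable section

set_option maxHeartbeats 1000000 in
/-- the cutoff approximation u₀^α = ∇⊥(φ(ρ(x)/α)ψ) of the
initial velocity satisfies ‖u₀^α − u₀‖_{L²(Ω)} ≤ K α^{1/2}. -/
theorem initial_data_approximation_l2
    (Ω : Set R2) (hΩ : ExteriorDomain Ω)
    (n : R2 → R2) (hn : ∀ x ∈ frontier Ω, ‖n x‖ = 1)
    -- the collar Π_α = {ρ < 2α} has measure O(α) (smooth compact boundary)
    (hcollar : ∃ M > (0:ℝ), ∀ α ∈ Ioo (0:ℝ) 1,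
      (volume {x ∈ Ω | bdist Ω x < 2 * α}).toReal ≤ M * α)
    (u0 : R2 → R2)
    (hH3 : ∀ k : ℕ, k ≤ 3 →
      MemLp (fun x => iteratedFDeriv ℝ k u0 x) 2 (volume.restrict Ω))
    (hdiv : ∀ x ∈ Ω, divg u0 x = 0)
    (htang : ∀ x ∈ frontier Ω, inner ℝ (u0 x) (n x) = (0:ℝ))
    (ψ : R2 → ℝ) (hψ : ContDiff ℝ (⊤ : ℕ∞) ψ)
    (hstream : ∀ x ∈ Ω, u0 x = perpGrad ψ x)
    (hψ0 : ∀ x ∈ frontier Ω, ψ x = 0)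
    (φ : ℝ → ℝ) (hφ : ContDiff ℝ (⊤ : ℕ∞) φ)
    (hφ0 : ∀ s : ℝ, s ≤ 1 → φ s = 0) (hφ1 : ∀ s : ℝ, 2 ≤ s → φ s = 1)
    (hφb : ∀ s, 0 ≤ φ s ∧ φ s ≤ 1)
    (uA : ℝ → R2 → R2)
    (hdef : ∀ α : ℝ, ∀ x, uA α x = perpGrad (fun y => φ (bdist Ω y / α) * ψ y) x) :
    ∃ K > (0:ℝ), ∀ α ∈ Ioo (0:ℝ) 1,
      l2 Ω (fun x => uA α x - u0 x) ≤ K * Real.sqrt α := by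
  classical
  obtain ⟨M, hM, hcol⟩ := hcollar
  obtain ⟨O, hO_open, hO_bdd, hO_ne, -, hΩ_eq⟩ := hΩ
  set Γ : Set R2 := frontier Ω with hΓdef
  have hΩ_open : IsOpen Ω := by rw [hΩ_eq]; exact isClosed_closure.isOpen_compl
  have hΓ_eq : Γ = frontier (closure O) := by rw [hΓdef, hΩ_eq, frontier_compl]
  have hΓ_sub : Γ ⊆ closure O := by rw [hΓ_eq]; exact frontier_subset_closure.trans (by simp)
  have hΓ_bdd : Bornology.IsBounded Γ := (hO_bdd.closure).subset hΓ_sub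
  have hΓ_cpt : IsCompact Γ := Metric.isCompact_of_isClosed_isBounded isClosed_frontier hΓ_bdd
  have hΓ_ne : Γ.Nonempty := by
    rw [hΓ_eq]
    by_contra h
    rw [not_nonempty_iff_eq_empty] at h
    rcases frontier_eq_empty_iff.mp h with h' | h'
    · exact (hO_ne.mono subset_closure).ne_empty h'
    · exact NormedSpace.unbounded_univ ℝ R2 (h' ▸ hO_bdd.closure)
  -- ρ facts
  have hρlip : LipschitzWith 1 (bdist Ω) := Metric.lipschitz_infDist_pt Γ
  have hρcont : Continuous (bdist Ω) := hρlip.continuous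
  have hρnn : ∀ x, 0 ≤ bdist Ω x := fun x => Metric.infDist_nonneg
  have hρd : ∀ y z : R2, |bdist Ω y - bdist Ω z| ≤ ‖y - z‖ := by
    intro y z
    simpa [Real.dist_eq, dist_eq_norm] using hρlip.dist_le_mul y z
  -- compact neighborhood K₃
  set K₃ : Set R2 := {x | bdist Ω x ≤ 3} with hK₃def
  have hK₃closed : IsClosed K₃ := isClosed_le hρcont continuous_const
  have hK₃bdd : Bornology.IsBounded K₃ := by
    obtain ⟨z₁, hz₁⟩ := id hΓ_ne
    refine (Metric.isBounded_closedBall (x := z₁) (r := 3 + (Metric.diam Γ))).subset ?_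
    intro x hx
    obtain ⟨z, hzΓ, hzd⟩ := hΓ_cpt.exists_infDist_eq_dist hΓ_ne x
    have h1 : dist x z ≤ 3 := by rw [← hzd]; exact hx
    have h2 : dist z z₁ ≤ Metric.diam Γ := Metric.dist_le_diam_of_mem hΓ_cpt.isBounded hzΓ hz₁
    exact Metric.mem_closedBall.2 ((dist_triangle x z z₁).trans (by linarith))
  have hK₃cpt : IsCompact K₃ := Metric.isCompact_of_isClosed_isBounded hK₃closed hK₃bdd
  -- bound L on ∇ψ over K₃
  obtain ⟨L₀, hL₀⟩ := hK₃cpt.exists_bound_of_continuousOn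
    (f := fun x => fderiv ℝ ψ x) (hψ.continuous_fderiv (by simp)).continuousOn
  set L : ℝ := max L₀ 0 with hLdef
  have hL0 : 0 ≤ L := le_max_right _ _
  have hLb : ∀ x ∈ K₃, ‖fderiv ℝ ψ x‖ ≤ L := fun x hx => (hL₀ x hx).trans (le_max_left _ _)
  have hψdiff : ∀ x : R2, DifferentiableAt ℝ ψ x := fun x =>
    (hψ.differentiable (by simp)).differentiableAt
  -- ψ is L-Lipschitz on convex subsets of K₃
  have hψlip : ∀ s : Set R2, Convex ℝ s → s ⊆ K₃ → ∀ y ∈ s, ∀ z ∈ s,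
      |ψ y - ψ z| ≤ L * ‖y - z‖ := by
    intro s hs hsub y hy z hz
    exact hs.norm_image_sub_le_of_norm_fderiv_le (fun w hw => hψdiff w)
      (fun w hw => hLb w (hsub hw)) hz hy
  -- |ψ z| ≤ L ρ(z) in K₃
  have hψsmall : ∀ z : R2, bdist Ω z ≤ 3 → |ψ z| ≤ L * bdist Ω z := by
    intro z hz
    obtain ⟨z₀, hz₀Γ, hz₀d⟩ := hΓ_cpt.exists_infDist_eq_dist hΓ_ne z
    have hseg : segment ℝ z z₀ ⊆ K₃ := by
      intro p hp
      have hpball : p ∈ Metric.closedBall z₀ (dist z z₀) :=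
        (convex_closedBall z₀ (dist z z₀)).segment_subset
          (Metric.mem_closedBall.2 le_rfl) (Metric.mem_closedBall_self dist_nonneg) hp
      have : bdist Ω p ≤ dist p z₀ := Metric.infDist_le_dist_of_mem hz₀Γ
      have h2 : dist p z₀ ≤ dist z z₀ := hpball
      show bdist Ω p ≤ 3
      calc bdist Ω p ≤ dist z z₀ := this.trans h2
        _ = bdist Ω z := hz₀d.symm
        _ ≤ 3 := hz
    have := hψlip _ (convex_segment z z₀) hseg z (left_mem_segment ℝ z z₀)
      z₀ (right_mem_segment ℝ z z₀)
    rw [hψ0 z₀ hz₀Γ, sub_zero] at this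
    calc |ψ z| ≤ L * ‖z - z₀‖ := this
      _ = L * bdist Ω z := by rw [← dist_eq_norm, ← hz₀d]; rfl
  -- global Lipschitz bound for φ
  obtain ⟨B₀, hB₀⟩ := (isCompact_Icc (a := (1:ℝ)) (b := 2)).exists_bound_of_continuousOn
    (f := deriv φ) (hφ.continuous_deriv (by simp)).continuousOn
  set Bφ : ℝ := max B₀ 0 with hBφdef
  have hBφ0 : 0 ≤ Bφ := le_max_right _ _
  have hderivφ : ∀ s : ℝ, ‖deriv φ s‖ ≤ Bφ := by
    intro s
    rcases le_or_gt s 1 with h1 | h1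
    · rcases lt_or_eq_of_le h1 with h1' | h1'
      · have : deriv φ s = deriv (fun _ : ℝ => (0:ℝ)) s := by
          apply Filter.EventuallyEq.deriv_eq
          filter_upwards [Iio_mem_nhds h1'] with t ht using hφ0 t (le_of_lt ht)
        rw [this, deriv_const]; simpa using hBφ0
      · exact (hB₀ s (by rw [h1']; exact ⟨le_rfl, by norm_num⟩)).trans (le_max_left _ _)
    · rcases le_or_gt s 2 with h2 | h2
      · exact (hB₀ s ⟨le_of_lt h1, h2⟩).trans (le_max_left _ _)
      · have : deriv φ s = deriv (fun _ : ℝ => (1:ℝ)) s := by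
          apply Filter.EventuallyEq.deriv_eq
          filter_upwards [Ioi_mem_nhds h2] with t ht using hφ1 t (le_of_lt ht)
        rw [this, deriv_const]; simpa using hBφ0
  have hφlip : ∀ a b : ℝ, |φ a - φ b| ≤ Bφ * |a - b| := by
    intro a b
    have := convex_univ.norm_image_sub_le_of_norm_deriv_le (f := φ)
      (fun x _ => (hφ.differentiable (by simp)).differentiableAt)
      (fun x _ => hderivφ x) (mem_univ b) (mem_univ a)
    simpa [Real.norm_eq_abs] using this
  -- constants
  set Cg : ℝ := L * (1 + 2 * Bφ) with hCgdef
  have hCg0 : 0 ≤ Cg := by positivity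
  have hLCg : L ≤ Cg := by nlinarith
  set B : ℝ := Cg + L with hBdef
  have hB0 : 0 ≤ B := by positivity
  -- key local Lipschitz estimate for g = φ(ρ/α)ψ near the collar
  have hkey : ∀ α : ℝ, α ∈ Ioo (0:ℝ) 1 → ∀ x : R2, bdist Ω x ≤ 2*α →
      ∀ y z : R2, dist y x < α/2 → dist z x < α/2 → bdist Ω y ≤ bdist Ω z →
      |φ (bdist Ω y / α) * ψ y - φ (bdist Ω z / α) * ψ z| ≤ Cg * ‖y - z‖ := by
    rintro α ⟨hα0, hα1⟩ x hx y z hy hz hyz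
    have hball : ∀ w : R2, dist w x < α/2 → bdist Ω w ≤ 3 := by
      intro w hw
      have h := hρd w x
      rw [← dist_eq_norm] at h
      have h2 := (abs_le.mp h).2
      linarith
    have hballK : Metric.ball x (α/2) ⊆ K₃ := fun w hw => hball w (Metric.mem_ball.mp hw)
    have hyb : y ∈ Metric.ball x (α/2) := Metric.mem_ball.mpr hy
    have hzb : z ∈ Metric.ball x (α/2) := Metric.mem_ball.mpr hz
    have hψd := hψlip _ (convex_ball x (α/2)) hballK y hyb z hzb
    rcases le_or_gt (2*α) (bdist Ω y) with h2y | h2y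
    · -- both cutoffs equal 1
      have hy1 : φ (bdist Ω y / α) = 1 := hφ1 _ ((le_div_iff₀ hα0).mpr (by linarith))
      have hz1 : φ (bdist Ω z / α) = 1 := hφ1 _ ((le_div_iff₀ hα0).mpr (by linarith))
      rw [hy1, hz1, one_mul, one_mul]
      exact hψd.trans (mul_le_mul_of_nonneg_right hLCg (norm_nonneg _))
    · -- ρ(y) < 2α : use |ψ y| ≤ 2Lα
      have hψy : |ψ y| ≤ L * (2*α) := by
        have := hψsmall y (hball y hy)
        have := mul_le_mul_of_nonneg_left (le_of_lt h2y) hL0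
        linarith [hψsmall y (hball y hy)]
      have hφz1 : |φ (bdist Ω z / α)| ≤ 1 :=
        abs_le.mpr ⟨by linarith [(hφb (bdist Ω z / α)).1], (hφb _).2⟩
      have hφd : |φ (bdist Ω y / α) - φ (bdist Ω z / α)| ≤ Bφ * (‖y - z‖ / α) := by
        have h1 := hφlip (bdist Ω y / α) (bdist Ω z / α)
        have h2 : |bdist Ω y / α - bdist Ω z / α| = |bdist Ω y - bdist Ω z| / α := by
          rw [div_sub_div_same, abs_div, abs_of_pos hα0]
        rw [h2] at h1
        refine h1.trans (mul_le_mul_of_nonneg_left ?_ hBφ0)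
        exact (div_le_div_iff_of_pos_right hα0).mpr (hρd y z)
      have e : φ (bdist Ω y / α) * ψ y - φ (bdist Ω z / α) * ψ z
          = φ (bdist Ω z / α) * (ψ y - ψ z) + (φ (bdist Ω y / α) - φ (bdist Ω z / α)) * ψ y := by
        ring
      rw [e]
      calc |φ (bdist Ω z / α) * (ψ y - ψ z) + (φ (bdist Ω y / α) - φ (bdist Ω z / α)) * ψ y|
          ≤ |φ (bdist Ω z / α)| * |ψ y - ψ z|
            + |φ (bdist Ω y / α) - φ (bdist Ω z / α)| * |ψ y| := by
            refine (abs_add_le _ _).trans ?_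
            rw [abs_mul, abs_mul]
        _ ≤ 1 * (L * ‖y - z‖) + (Bφ * (‖y - z‖ / α)) * (L * (2*α)) := by
            gcongr
        _ = Cg * ‖y - z‖ := by rw [hCgdef]; field_simp
  -- derivative bound at collar points
  have hpdg : ∀ α : ℝ, α ∈ Ioo (0:ℝ) 1 → ∀ x : R2, bdist Ω x ≤ 2*α → ∀ i : Fin 2,
      |pd i (fun y => φ (bdist Ω y / α) * ψ y) x| ≤ Cg := by
    intro α hα x hx i
    have hα0 : (0:ℝ) < α := hα.1
    have hf : ‖fderiv ℝ (fun y => φ (bdist Ω y / α) * ψ y) x‖ ≤ Cg := by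
      apply norm_fderiv_le_of_lip' ℝ hCg0
      filter_upwards [Metric.ball_mem_nhds x (by positivity : (0:ℝ) < α/2)] with y hy
      have hy' : dist y x < α/2 := Metric.mem_ball.mp hy
      have hx' : dist x x < α/2 := by simpa using (by positivity : (0:ℝ) < α/2)
      rcases le_total (bdist Ω y) (bdist Ω x) with h | h
      · simpa [Real.norm_eq_abs, dist_eq_norm] using hkey α hα x hx y x hy' hx' h
      · rw [Real.norm_eq_abs, abs_sub_comm, norm_sub_rev]
        exact hkey α hα x hx x y hx' hy' h
    have hle := (fderiv ℝ (fun y => φ (bdist Ω y / α) * ψ y) x).le_opNorm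
      (EuclideanSpace.single i 1)
    rw [EuclideanSpace.norm_single, norm_one, mul_one] at hle
    calc |pd i (fun y => φ (bdist Ω y / α) * ψ y) x|
        = ‖fderiv ℝ (fun y => φ (bdist Ω y / α) * ψ y) x (EuclideanSpace.single i 1)‖ := rfl
      _ ≤ _ := hle.trans hf
  have hpdψ : ∀ x : R2, bdist Ω x ≤ 3 → ∀ i : Fin 2, |pd i ψ x| ≤ L := by
    intro x hx i
    have hle := (fderiv ℝ ψ x).le_opNorm (EuclideanSpace.single i 1)
    rw [EuclideanSpace.norm_single, norm_one, mul_one] at hle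
    calc |pd i ψ x| = ‖fderiv ℝ ψ x (EuclideanSpace.single i 1)‖ := rfl
      _ ≤ _ := hle.trans (hLb x hx)
  -- pointwise bound
  have hptw : ∀ α : ℝ, α ∈ Ioo (0:ℝ) 1 → ∀ x, x ∈ Ω →
      ‖uA α x - u0 x‖^2 ≤ ({y : R2 | bdist Ω y ≤ 2*α}.indicator (fun _ => 2*B^2)) x := by
    intro α hα x hxΩ
    have hα0 : (0:ℝ) < α := hα.1
    rcases le_or_gt (bdist Ω x) (2*α) with hc | hc
    · rw [Set.indicator_of_mem (show x ∈ {y : R2 | bdist Ω y ≤ 2*α} from hc)]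
      have hx3 : bdist Ω x ≤ 3 := by nlinarith [hα.2]
      have hval0 : (uA α x - u0 x) 0
          = -(pd 1 (fun y => φ (bdist Ω y / α) * ψ y) x) + pd 1 ψ x := by
        have h : (uA α x - u0 x) 0 = uA α x 0 - u0 x 0 := rfl
        rw [h, hdef α x, hstream x hxΩ]
        show -(pd 1 (fun y => φ (bdist Ω y / α) * ψ y) x) - (-(pd 1 ψ x)) = _
        ring
      have hval1 : (uA α x - u0 x) 1
          = pd 0 (fun y => φ (bdist Ω y / α) * ψ y) x - pd 0 ψ x := by
        have h : (uA α x - u0 x) 1 = uA α x 1 - u0 x 1 := rfl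
        rw [h, hdef α x, hstream x hxΩ]
        rfl
      have h0 : |(uA α x - u0 x) 0| ≤ B := by
        rw [hval0, hBdef]
        have := hpdg α hα x hc 1
        have := hpdψ x hx3 1
        calc |(-(pd 1 (fun y => φ (bdist Ω y / α) * ψ y) x) + pd 1 ψ x)|
            ≤ |pd 1 (fun y => φ (bdist Ω y / α) * ψ y) x| + |pd 1 ψ x| := by
              refine (abs_add_le _ _).trans ?_; rw [abs_neg]
          _ ≤ Cg + L := by gcongr <;> assumption
      have h1 : |(uA α x - u0 x) 1| ≤ B := by
        rw [hval1, hBdef]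
        have := hpdg α hα x hc 0
        have := hpdψ x hx3 0
        calc |(pd 0 (fun y => φ (bdist Ω y / α) * ψ y) x - pd 0 ψ x)|
            ≤ |pd 0 (fun y => φ (bdist Ω y / α) * ψ y) x| + |pd 0 ψ x| := abs_sub _ _
          _ ≤ Cg + L := by gcongr <;> assumption
      have hnorm : ‖uA α x - u0 x‖^2 = ∑ i, ((uA α x - u0 x) i)^2 := by
        rw [EuclideanSpace.norm_eq, Real.sq_sqrt (by positivity)]
        simp [sq_abs]
      rw [hnorm, Fin.sum_univ_two]
      nlinarith [sq_abs ((uA α x - u0 x) 0), sq_abs ((uA α x - u0 x) 1),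
        abs_nonneg ((uA α x - u0 x) 0), abs_nonneg ((uA α x - u0 x) 1)]
    · rw [Set.indicator_of_notMem (by simp only [mem_setOf_eq]; push_neg; exact hc)]
      have hfe : (fun y => φ (bdist Ω y / α) * ψ y) =ᶠ[𝓝 x] ψ := by
        have hU : (bdist Ω) ⁻¹' (Ioi (2*α)) ∈ 𝓝 x :=
          (isOpen_Ioi.preimage hρcont).mem_nhds hc
        filter_upwards [hU] with y hy
        have : φ (bdist Ω y / α) = 1 :=
          hφ1 _ ((le_div_iff₀ hα0).mpr (by have := mem_preimage.mp hy; simp at this ⊢; linarith))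
        simp [this]
      have heq : uA α x = u0 x := by
        rw [hdef α x, hstream x hxΩ]
        have hfd := Filter.EventuallyEq.fderiv_eq (𝕜 := ℝ) hfe
        show perpGrad _ x = perpGrad ψ x
        unfold perpGrad pd
        rw [hfd]
      rw [heq, sub_self]
      simp
  -- conclusion
  refine ⟨2*(B+1)*Real.sqrt M, by positivity, ?_⟩
  intro α hα
  have hα0 : (0:ℝ) < α := hα.1
  have hα1 : α < 1 := hα.2
  set S : Set R2 := {y : R2 | bdist Ω y ≤ 2*α} with hSdef
  have hS_meas : MeasurableSet S := (isClosed_le hρcont continuous_const).measurableSet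
  set β : ℝ := min (2*α) ((1+α)/2) with hβdef
  have hβα : α < β := lt_min (by linarith) (by linarith)
  have hβ1 : β < 1 := (min_le_right _ _).trans_lt (by linarith)
  have hβ0 : 0 < β := hα0.trans hβα
  have hsub : S ∩ Ω ⊆ {x | x ∈ Ω ∧ bdist Ω x < 2*β} := by
    rintro x ⟨hxS, hxΩ⟩
    exact ⟨hxΩ, lt_of_le_of_lt hxS (by linarith)⟩
  have hTsub : {x | x ∈ Ω ∧ bdist Ω x < 2*β} ⊆ K₃ := by
    rintro x ⟨-, hx⟩
    show bdist Ω x ≤ 3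
    linarith
  have hTfin : volume {x | x ∈ Ω ∧ bdist Ω x < 2*β} < ⊤ :=
    lt_of_le_of_lt (measure_mono hTsub) hK₃cpt.measure_lt_top
  have hvol : (volume (S ∩ Ω)).toReal ≤ 2*M*α := by
    have h1 : (volume (S ∩ Ω)).toReal ≤ (volume {x | x ∈ Ω ∧ bdist Ω x < 2*β}).toReal :=
      ENNReal.toReal_mono hTfin.ne (measure_mono hsub)
    have h2 := hcol β ⟨hβ0, hβ1⟩
    have h3 : M * β ≤ 2*M*α := by nlinarith [min_le_left (2*α) ((1+α)/2)]
    linarith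
  have hres : (volume.restrict Ω) S = volume (S ∩ Ω) :=
    Measure.restrict_apply hS_meas
  have hInt : Integrable (S.indicator (fun _ => 2*B^2)) (volume.restrict Ω) := by
    rw [integrable_indicator_iff hS_meas]
    refine integrableOn_const (hs := ?_)
    rw [hres]
    exact (lt_of_le_of_lt (measure_mono (hsub.trans hTsub)) hK₃cpt.measure_lt_top).ne
  have h0f : 0 ≤ᵐ[volume.restrict Ω] (fun x => ‖uA α x - u0 x‖^2) :=
    Eventually.of_forall (fun x => by positivity)
  have hlef : (fun x => ‖uA α x - u0 x‖^2) ≤ᵐ[volume.restrict Ω]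
      S.indicator (fun _ => 2*B^2) :=
    (ae_restrict_iff' hΩ_open.measurableSet).mpr (Eventually.of_forall (hptw α hα))
  have hmono : (∫ x in Ω, ‖uA α x - u0 x‖^2) ≤ ∫ x in Ω, S.indicator (fun _ => 2*B^2) x :=
    integral_mono_of_nonneg h0f hInt hlef
  have hRHS : (∫ x in Ω, S.indicator (fun _ => 2*B^2) x) = (volume (S ∩ Ω)).toReal * (2*B^2) := by
    rw [integral_indicator_const _ hS_meas, measureReal_def, hres, smul_eq_mul]
  have hI : (∫ x in Ω, ‖uA α x - u0 x‖^2) ≤ 2*M*α * (2*B^2) := by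
    refine hmono.trans ?_
    rw [hRHS]
    exact mul_le_mul_of_nonneg_right hvol (by positivity)
  have hKα : (2*(B+1)*Real.sqrt M * Real.sqrt α)^2 = 4*(B+1)^2*M*α := by
    rw [mul_pow, mul_pow, mul_pow, Real.sq_sqrt hM.le, Real.sq_sqrt hα0.le]
    ring
  have hI2 : (∫ x in Ω, ‖uA α x - u0 x‖^2) ≤ (2*(B+1)*Real.sqrt M * Real.sqrt α)^2 := by
    rw [hKα]
    nlinarith [hM.le, hα0.le, hB0]
  calc l2 Ω (fun x => uA α x - u0 x)
      = Real.sqrt (∫ x in Ω, ‖uA α x - u0 x‖^2) := rfl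
    _ ≤ Real.sqrt ((2*(B+1)*Real.sqrt M * Real.sqrt α)^2) := Real.sqrt_le_sqrt hI2
    _ = 2*(B+1)*Real.sqrt M * Real.sqrt α := Real.sqrt_sq (by positivity)
end
end
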